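/- Let q, w, q^r ∈ R² and H > 0. Define D = 2(1/H⁴ − 1/(‖q^r − w‖² + H²)²) and F = 1/(‖q^r − w‖² + H²) + 2‖q^r − w‖²/(‖q^r − w‖² + H²)² − ‖q^r − w‖²/H⁴. Then −‖q − w‖²/H⁴ + D·⟨q − w, q^r − w⟩ + F ≤ 1/(H² + ‖q − w‖²). -/

import Mathlib

/-!
With `g v = 1 / (H² + ‖v‖²)`, `u = q - w` and `v = qʳ - w`, the left-hand side is the quadratic
minorant `g v + ⟪∇g v, u - v⟫ - ‖u - v‖² / H⁴`. Writing `A = H² + ‖v‖²`, `B = H² + ‖u‖²`, it equals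
`1/A - (B - A)/A² + ‖u - v‖² (1/A² - 1/H⁴)`; the last term is nonpositive because `A ≥ H²`, and the
rest is the tangent line of the convex function `z ↦ 1/z` at `A`, evaluated at `B`.
-/

lemma one_div_sub_div_sq_le_one_div {a c : ℝ} (ha : 0 < a) (hc : 0 < c) :
    1 / a - (c - a) / a ^ 2 ≤ 1 / c := by
  have gap : 1 / c - (1 / a - (c - a) / a ^ 2) = (c - a) ^ 2 / (a ^ 2 * c) := by
    field_simp
    ring
  have : 0 ≤ (c - a) ^ 2 / (a ^ 2 * c) := by positivity
  linarith

lemma one_div_add_norm_sq_minorant_le {E : Type*} [NormedAddCommGroup E] [InnerProductSpace ℝ E]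
    {b : ℝ} (hb : 0 < b) (u v : E) :
    1 / (b + ‖v‖ ^ 2) - 2 * inner ℝ v (u - v) / (b + ‖v‖ ^ 2) ^ 2 - ‖u - v‖ ^ 2 / b ^ 2
      ≤ 1 / (b + ‖u‖ ^ 2) := by
  set A := b + ‖v‖ ^ 2
  have hA : 0 < A := by positivity
  have hbA : 1 / A ^ 2 ≤ 1 / b ^ 2 := by
    gcongr
    exact le_add_of_nonneg_right (sq_nonneg _)
  have expand : ‖u‖ ^ 2 = ‖v‖ ^ 2 + 2 * inner ℝ v (u - v) + ‖u - v‖ ^ 2 := by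
    rw [← norm_add_sq_real, add_sub_cancel]
  have rearrange : 1 / A - 2 * inner ℝ v (u - v) / A ^ 2 - ‖u - v‖ ^ 2 / b ^ 2
      = 1 / A - (b + ‖u‖ ^ 2 - A) / A ^ 2 + ‖u - v‖ ^ 2 * (1 / A ^ 2 - 1 / b ^ 2) := by
    rw [expand]
    ring
  rw [rearrange]
  have curvature : ‖u - v‖ ^ 2 * (1 / A ^ 2 - 1 / b ^ 2) ≤ 0 :=
    mul_nonpos_of_nonneg_of_nonpos (sq_nonneg _) (sub_nonpos.mpr hbA)
  linarith [one_div_sub_div_sq_le_one_div hA (by positivity : 0 < b + ‖u‖ ^ 2)]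

theorem channel_gain_surrogate_instance (q w qr : EuclideanSpace ℝ (Fin 2))
    (H : ℝ) (hH : 0 < H) :
    - ‖q - w‖ ^ 2 / H ^ 4
      + (2 * (1 / H ^ 4 - 1 / (‖qr - w‖ ^ 2 + H ^ 2) ^ 2))
          * inner ℝ (q - w) (qr - w)
      + (1 / (‖qr - w‖ ^ 2 + H ^ 2)
          + 2 * ‖qr - w‖ ^ 2 / (‖qr - w‖ ^ 2 + H ^ 2) ^ 2
          - ‖qr - w‖ ^ 2 / H ^ 4)
      ≤ 1 / (H ^ 2 + ‖q - w‖ ^ 2) := by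
  generalize q - w = u, qr - w = v
  have minorant := one_div_add_norm_sq_minorant_le (pow_pos hH 2) u v
  rw [inner_sub_right, real_inner_self_eq_norm_sq, real_inner_comm, norm_sub_sq_real] at minorant
  convert minorant using 1
  ring
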